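/- Let Λ be a full-rank lattice in R^n and C₁ the closed unit ball of a norm on R^n. Then |Λ ∩ XC₁| = (vol(C₁)/vol(R^n/Λ))·X^n + O(X^{n−1}) as X → ∞. -/

import Mathlib

open MeasureTheory Set Pointwise

private lemma pow_sub_pow_le_aux {a b : ℝ} (hb : 0 ≤ b) (hab : b ≤ a) (n : ℕ) :
    a ^ n - b ^ n ≤ n * (a - b) * a ^ (n - 1) := by
  have ha : 0 ≤ a := hb.trans hab
  rw [← geom_sum₂_mul]
  have hterm : ∀ i ∈ Finset.range n, a ^ i * b ^ (n - 1 - i) ≤ a ^ (n - 1) := by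
    intro i hi
    rw [Finset.mem_range] at hi
    calc a ^ i * b ^ (n - 1 - i) ≤ a ^ i * a ^ (n - 1 - i) := by
          gcongr
      _ = a ^ (n - 1) := by rw [← pow_add]; congr 1; omega
  calc (∑ i ∈ Finset.range n, a ^ i * b ^ (n - 1 - i)) * (a - b)
      ≤ (n * a ^ (n - 1)) * (a - b) := by
        apply mul_le_mul_of_nonneg_right _ (by linarith)
        calc (∑ i ∈ Finset.range n, a ^ i * b ^ (n - 1 - i))
            ≤ ∑ _i ∈ Finset.range n, a ^ (n - 1) := Finset.sum_le_sum hterm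
          _ = n * a ^ (n - 1) := by
              rw [Finset.sum_const, Finset.card_range, nsmul_eq_mul]
    _ = n * (a - b) * a ^ (n - 1) := by ring

set_option maxHeartbeats 1000000 in
/-- Let `Λ` be a full-rank lattice in `ℝⁿ` and `C₁ = {x : ν x ≤ 1}` the closed unit ball
of an arbitrary norm `ν` on `ℝⁿ`. Then
`#(Λ ∩ X·C₁) = (vol C₁ / covol Λ) · Xⁿ + O(X^(n-1))` as `X → ∞`. -/
theorem lattice_point_counting (n : ℕ) (hn : 1 ≤ n)
    (ν : (Fin n → ℝ) → ℝ)
    (hν0 : ∀ x, ν x = 0 ↔ x = 0)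
    (hνsmul : ∀ (c : ℝ) (x), ν (c • x) = |c| * ν x)
    (hνadd : ∀ x y, ν (x + y) ≤ ν x + ν y)
    (Λ : Submodule ℤ (Fin n → ℝ)) [DiscreteTopology Λ] [IsZLattice ℝ Λ] :
    ∃ C : ℝ, ∀ X : ℝ, 1 ≤ X →
      |(Nat.card {v : Λ // ν (v : Fin n → ℝ) ≤ X} : ℝ) -
          (volume {x : Fin n → ℝ | ν x ≤ 1}).toReal / ZLattice.covolume Λ * X ^ n|
        ≤ C * X ^ (n - 1) := by
  classical
  -- Basic facts about the norm ν
  have h00 : ν 0 = 0 := (hν0 0).mpr rfl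
  have hneg : ∀ x, ν (-x) = ν x := by
    intro x; have := hνsmul (-1) x; simpa using this
  have hnonneg : ∀ x, 0 ≤ ν x := by
    intro x
    have h := hνadd x (-x)
    rw [add_neg_cancel, h00, hneg] at h
    linarith
  have hsum : ∀ (s : Finset (Fin n)) (f : Fin n → (Fin n → ℝ)),
      ν (∑ i ∈ s, f i) ≤ ∑ i ∈ s, ν (f i) := by
    intro s f
    induction s using Finset.induction with
    | empty => simp [h00]
    | insert _ _ h ih =>
        rw [Finset.sum_insert h, Finset.sum_insert h]
        exact (hνadd _ _).trans (by linarith)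
  -- upper bound by the sup norm
  set M : ℝ := ∑ i : Fin n, ν (fun j => if i = j then (1 : ℝ) else 0) with hM
  have hMnonneg : 0 ≤ M := Finset.sum_nonneg fun i _ => hnonneg _
  have hub : ∀ x, ν x ≤ M * ‖x‖ := by
    intro x
    calc ν x = ν (∑ i : Fin n, x i • fun j => if i = j then (1 : ℝ) else 0) := by
          rw [← pi_eq_sum_univ x]
      _ ≤ ∑ i : Fin n, ν (x i • fun j => if i = j then (1 : ℝ) else 0) := hsum _ _
      _ = ∑ i : Fin n, |x i| * ν (fun j => if i = j then (1 : ℝ) else 0) := by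
          simp_rw [hνsmul]
      _ ≤ ∑ i : Fin n, ‖x‖ * ν (fun j => if i = j then (1 : ℝ) else 0) := by
          apply Finset.sum_le_sum; intro i _
          exact mul_le_mul_of_nonneg_right
            (by simpa using norm_le_pi_norm x i) (hnonneg _)
      _ = M * ‖x‖ := by rw [← Finset.mul_sum, mul_comm]
  have hsub : ∀ x y, ν x - ν y ≤ ν (x - y) := by
    intro x y
    have h := hνadd (x - y) y
    rw [sub_add_cancel] at h
    linarith
  -- continuity of ν
  have hcont : Continuous ν := by
    have hlip : LipschitzWith (Real.toNNReal M) ν := by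
      refine LipschitzWith.of_dist_le_mul fun x y => ?_
      have h1 : ν x - ν y ≤ ν (x - y) := hsub x y
      have h2 : ν y - ν x ≤ ν (x - y) := by
        have h := hsub y x
        rwa [← hneg (y - x), neg_sub] at h
      have h3 : ν (x - y) ≤ M * ‖x - y‖ := hub _
      have h4 : (Real.toNNReal M : ℝ) = max M 0 := Real.coe_toNNReal' M
      rw [Real.dist_eq, dist_eq_norm, h4, abs_sub_le_iff, max_eq_left hMnonneg]
      constructor <;> linarith
    exact hlip.continuous
  -- lower bound by the sup norm
  haveI : Nonempty (Fin n) := Fin.pos_iff_nonempty.mp hn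
  obtain ⟨x₀, hx₀mem, hx₀min⟩ := (isCompact_sphere (0 : Fin n → ℝ) 1).exists_isMinOn
    (NormedSpace.sphere_nonempty.mpr zero_le_one) hcont.continuousOn
  have hx₀norm : ‖x₀‖ = 1 := mem_sphere_zero_iff_norm.mp hx₀mem
  set c : ℝ := ν x₀ with hc
  have hcpos : 0 < c := by
    rcases (hnonneg x₀).lt_or_eq with h | h
    · exact h
    · exfalso
      have : x₀ = 0 := (hν0 x₀).mp h.symm
      rw [this, norm_zero] at hx₀norm
      norm_num at hx₀norm
  have hlb : ∀ x, c * ‖x‖ ≤ ν x := by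
    intro x
    rcases eq_or_ne x 0 with rfl | hx
    · simp [h00]
    · have hnx : 0 < ‖x‖ := norm_pos_iff.mpr hx
      have hmem : ‖x‖⁻¹ • x ∈ Metric.sphere (0 : Fin n → ℝ) 1 := by
        rw [mem_sphere_zero_iff_norm, norm_smul, norm_inv, norm_norm,
          inv_mul_cancel₀ hnx.ne']
      have h := hx₀min hmem
      simp only [Set.mem_setOf_eq] at h
      rw [hνsmul, abs_inv, abs_of_pos hnx] at h
      have h' : c ≤ ν x / ‖x‖ := by rwa [inv_mul_eq_div] at h
      calc c * ‖x‖ ≤ (ν x / ‖x‖) * ‖x‖ := by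
            exact mul_le_mul_of_nonneg_right h' hnx.le
        _ = ν x := div_mul_cancel₀ _ hnx.ne'
  -- lattice setup
  set b₀ := Module.Free.chooseBasis ℤ Λ with hb₀
  set b := b₀.ofZLatticeBasis ℝ with hb
  set F := ZSpan.fundamentalDomain b with hFdef
  have hFmeas : MeasurableSet F := ZSpan.fundamentalDomain_measurableSet b
  have hFund : IsAddFundamentalDomain Λ F volume := ZLattice.isAddFundamentalDomain b₀ volume
  have hcov : ZLattice.covolume Λ = (volume F).toReal :=
    ZLattice.covolume_eq_measure_fundamentalDomain Λ volume hFund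
  obtain ⟨R, hR⟩ := (ZSpan.fundamentalDomain_isBounded b).subset_closedBall 0
  have hR' : F ⊆ Metric.closedBall 0 |R| :=
    hR.trans (Metric.closedBall_subset_closedBall (le_abs_self R))
  set ρ : ℝ := M * |R| with hρ
  have hρ0 : 0 ≤ ρ := mul_nonneg hMnonneg (abs_nonneg R)
  have hνF : ∀ f ∈ F, ν f ≤ ρ := by
    intro f hf
    have h1 : ‖f‖ ≤ |R| := by
      have := hR' hf
      rwa [Metric.mem_closedBall, dist_zero_right] at this
    exact (hub f).trans (mul_le_mul_of_nonneg_left h1 hMnonneg)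
  -- the unit ball
  set C₁ : Set (Fin n → ℝ) := {x | ν x ≤ 1} with hC₁def
  have hC₁sub : C₁ ⊆ Metric.closedBall 0 c⁻¹ := by
    intro x hx
    rw [Metric.mem_closedBall, dist_zero_right]
    have h1 := hlb x
    have h2 : ν x ≤ 1 := hx
    calc ‖x‖ = c⁻¹ * (c * ‖x‖) := by field_simp
      _ ≤ c⁻¹ * 1 := mul_le_mul_of_nonneg_left (h1.trans h2) (inv_nonneg.mpr hcpos.le)
      _ = c⁻¹ := mul_one _
  have hC₁fin : volume C₁ < ⊤ :=
    lt_of_le_of_lt (measure_mono hC₁sub) (measure_closedBall_lt_top)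
  -- scaling of the norm balls
  have hscale : ∀ Y : ℝ, 0 < Y →
      volume {x : Fin n → ℝ | ν x ≤ Y} = ENNReal.ofReal (Y ^ n) * volume C₁ := by
    intro Y hY
    have hset : {x : Fin n → ℝ | ν x ≤ Y} = Y • C₁ := by
      ext x
      rw [Set.mem_smul_set_iff_inv_smul_mem₀ hY.ne']
      simp only [Set.mem_setOf_eq, hC₁def]
      rw [hνsmul, abs_inv, abs_of_pos hY, inv_mul_eq_div, div_le_one hY]
    rw [hset, Measure.addHaar_smul, Module.finrank_fin_fun, abs_of_pos (pow_pos hY n)]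
  -- finiteness of lattice points in norm balls
  have hclosed : IsClosed (Λ : Set (Fin n → ℝ)) := by
    have : DiscreteTopology Λ.toAddSubgroup := ‹DiscreteTopology Λ›
    exact AddSubgroup.isClosed_of_discrete (H := Λ.toAddSubgroup)
  have hfin : ∀ X : ℝ, {v : Λ | ν ↑v ≤ X}.Finite := by
    intro X
    have hdt : DiscreteTopology ((Λ : Set (Fin n → ℝ))) := ‹DiscreteTopology Λ›
    have h1 : (Metric.closedBall (0 : Fin n → ℝ) (X / c) ∩ (Λ : Set _)).Finite :=
      Metric.finite_isBounded_inter_isClosed (isDiscrete_iff_discreteTopology.mpr hdt) Metric.isBounded_closedBall hclosed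
    refine Set.Finite.of_finite_image (f := fun v : Λ => (v : Fin n → ℝ))
      (h1.subset ?_) (Subtype.coe_injective.injOn)
    rintro x ⟨v, hv, rfl⟩
    refine ⟨?_, v.2⟩
    rw [Metric.mem_closedBall, dist_zero_right, le_div_iff₀ hcpos]
    have := hlb (v : Fin n → ℝ)
    simp only [Set.mem_setOf_eq] at hv
    linarith [mul_comm c ‖(v : Fin n → ℝ)‖]
  -- main counting argument
  set V : ℝ := (volume C₁).toReal with hV
  set D : ℝ := (volume F).toReal with hD
  have hDpos : 0 < D := by
    exact hcov ▸ ZLattice.covolume_pos Λ volume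
  have hVnonneg : 0 ≤ V := ENNReal.toReal_nonneg
  have hFfin : volume F < ⊤ := (ZSpan.fundamentalDomain_isBounded b).measure_lt_top
  refine ⟨(n * ρ * ((1 + ρ) ^ (n - 1) + 1)) * V / D, fun X hX => ?_⟩
  have hX0 : 0 < X := lt_of_lt_of_le one_pos hX
  have hTfin := hfin X
  set s : Finset Λ := hTfin.toFinset with hs
  have hcard : (Nat.card {v : Λ // ν (v : Fin n → ℝ) ≤ X} : ℝ) = (s.card : ℝ) := by
    norm_cast
    rw [show {v : Λ // ν (v : Fin n → ℝ) ≤ X} = ↥{v : Λ | ν (v : Fin n → ℝ) ≤ X} from rfl,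
      Nat.card_coe_set_eq, Set.ncard_eq_toFinset_card _ hTfin]
  -- measure of the union of translates
  have hunion : volume (⋃ v ∈ s, ((v : Fin n → ℝ) +ᵥ F)) = (s.card : ENNReal) * volume F := by
    rw [measure_biUnion_finset₀]
    · simp_rw [measure_vadd]
      rw [Finset.sum_const, nsmul_eq_mul]
    · intro v _ w _ hvw
      exact hFund.aedisjoint hvw
    · exact fun v _ => (hFmeas.const_vadd _).nullMeasurableSet
  have hupset : (⋃ v ∈ s, ((v : Fin n → ℝ) +ᵥ F)) ⊆ {x | ν x ≤ X + ρ} := by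
    intro x hx
    simp only [Set.mem_iUnion] at hx
    obtain ⟨v, hv, f, hf, rfl⟩ := hx
    have hv' : ν (v : Fin n → ℝ) ≤ X := by
      simpa [hs, Set.Finite.mem_toFinset] using hv
    have h1 := hνadd (v : Fin n → ℝ) f
    have h2 := hνF f hf
    show ν ((v : Fin n → ℝ) + f) ≤ X + ρ
    linarith
  have hloset : {x : Fin n → ℝ | ν x ≤ X - ρ} ⊆ ⋃ v ∈ s, ((v : Fin n → ℝ) +ᵥ F) := by
    intro x hx
    simp only [Set.mem_setOf_eq] at hx
    obtain ⟨v, hv, -⟩ := ZSpan.exist_unique_vadd_mem_fundamentalDomain b x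
    have hvΛ : (v : Fin n → ℝ) ∈ Λ := (le_of_eq (b₀.ofZLatticeBasis_span ℝ)) v.2
    have hvF : (v : Fin n → ℝ) + x ∈ F := hv
    have hw : ν (-(v : Fin n → ℝ)) ≤ X := by
      have h1 : ν ((v : Fin n → ℝ) + x) ≤ ρ := hνF _ hvF
      have h2 := hνadd ((v : Fin n → ℝ) + x) (-x)
      have h3 : (v : Fin n → ℝ) + x + -x = (v : Fin n → ℝ) := by abel
      rw [h3, hneg x] at h2
      calc ν (-(v : Fin n → ℝ)) = ν (v : Fin n → ℝ) := hneg _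
        _ ≤ ν ((v : Fin n → ℝ) + x) + ν x := h2
        _ ≤ ρ + (X - ρ) := add_le_add h1 hx
        _ = X := by ring
    refine Set.mem_iUnion₂.mpr ⟨⟨-(v : Fin n → ℝ), neg_mem hvΛ⟩, ?_, ?_⟩
    · simp only [hs, Set.Finite.mem_toFinset, Set.mem_setOf_eq]
      exact hw
    · refine ⟨(v : Fin n → ℝ) + x, hvF, ?_⟩
      show -(v : Fin n → ℝ) + ((v : Fin n → ℝ) + x) = x
      exact neg_add_cancel_left _ _
  -- measure comparisons
  have hup : (s.card : ENNReal) * volume F ≤ ENNReal.ofReal ((X + ρ) ^ n) * volume C₁ := by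
    rw [← hunion, ← hscale (X + ρ) (by linarith)]
    exact measure_mono hupset
  have hupR : (s.card : ℝ) * D ≤ (X + ρ) ^ n * V := by
    have hfin2 : ENNReal.ofReal ((X + ρ) ^ n) * volume C₁ ≠ ⊤ :=
      ENNReal.mul_ne_top ENNReal.ofReal_ne_top hC₁fin.ne
    have h1 := ENNReal.toReal_mono hfin2 hup
    rwa [ENNReal.toReal_mul, ENNReal.toReal_mul, ENNReal.toReal_natCast,
      ENNReal.toReal_ofReal (by positivity)] at h1
  have hloR : max (X - ρ) 0 ^ n * V ≤ (s.card : ℝ) * D := by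
    rcases le_or_gt (X - ρ) 0 with h | h
    · rw [max_eq_right h, zero_pow (by omega : n ≠ 0), zero_mul]
      positivity
    · rw [max_eq_left h.le]
      have hlo : ENNReal.ofReal ((X - ρ) ^ n) * volume C₁ ≤ (s.card : ENNReal) * volume F := by
        rw [← hunion, ← hscale (X - ρ) h]
        exact measure_mono hloset
      have hfin2 : (s.card : ENNReal) * volume F ≠ ⊤ :=
        ENNReal.mul_ne_top (ENNReal.natCast_ne_top _) hFfin.ne
      have h1 := ENNReal.toReal_mono hfin2 hlo
      rwa [ENNReal.toReal_mul, ENNReal.toReal_mul, ENNReal.toReal_natCast,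
        ENNReal.toReal_ofReal (by positivity)] at h1
  -- arithmetic conclusion
  set A : ℝ := (s.card : ℝ) with hA
  have hXn1 : (0:ℝ) ≤ X ^ (n - 1) := by positivity
  have honeρ : (1:ℝ) ≤ (1 + ρ) ^ (n - 1) + 1 := by
    nlinarith [pow_nonneg (by linarith : (0:ℝ) ≤ 1 + ρ) (n - 1)]
  have hupper : (X + ρ) ^ n - X ^ n ≤ n * ρ * ((1 + ρ) ^ (n - 1)) * X ^ (n - 1) := by
    have h1 := pow_sub_pow_le_aux (by positivity : (0:ℝ) ≤ X) (by linarith : X ≤ X + ρ) n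
    have h2 : (X + ρ) ^ (n - 1) ≤ ((1 + ρ) * X) ^ (n - 1) := by
      apply pow_le_pow_left₀ (by linarith)
      nlinarith
    rw [mul_pow] at h2
    have h3 : (n : ℝ) * (X + ρ - X) * (X + ρ) ^ (n - 1)
        ≤ (n : ℝ) * ρ * ((1 + ρ) ^ (n - 1) * X ^ (n - 1)) := by
      have : (n : ℝ) * (X + ρ - X) = (n : ℝ) * ρ := by ring
      rw [this]
      exact mul_le_mul_of_nonneg_left h2 (by positivity)
    calc (X + ρ) ^ n - X ^ n ≤ (n : ℝ) * (X + ρ - X) * (X + ρ) ^ (n - 1) := h1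
      _ ≤ (n : ℝ) * ρ * ((1 + ρ) ^ (n - 1) * X ^ (n - 1)) := h3
      _ = n * ρ * ((1 + ρ) ^ (n - 1)) * X ^ (n - 1) := by ring
  have hlower : X ^ n - max (X - ρ) 0 ^ n ≤ n * ρ * X ^ (n - 1) := by
    have hn' : (1:ℝ) ≤ (n : ℝ) := by exact_mod_cast hn
    rcases le_or_gt ρ X with h | h
    · rw [max_eq_left (by linarith)]
      have h1 := pow_sub_pow_le_aux (by linarith : (0:ℝ) ≤ X - ρ) (by linarith : X - ρ ≤ X) n
      calc X ^ n - (X - ρ) ^ n ≤ (n : ℝ) * (X - (X - ρ)) * X ^ (n - 1) := h1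
        _ = n * ρ * X ^ (n - 1) := by ring
    · rw [max_eq_right (by linarith), zero_pow (by omega : n ≠ 0), sub_zero]
      have hXn : X ^ n = X ^ (n - 1) * X := by
        rw [← pow_succ]; congr 1; omega
      calc X ^ n = X ^ (n - 1) * X := hXn
        _ ≤ X ^ (n - 1) * ρ := mul_le_mul_of_nonneg_left h.le hXn1
        _ = 1 * ρ * X ^ (n - 1) := by ring
        _ ≤ (n : ℝ) * ρ * X ^ (n - 1) :=
            mul_le_mul_of_nonneg_right (mul_le_mul_of_nonneg_right hn' hρ0) hXn1
  have key : |A * D - V * X ^ n| ≤ n * ρ * ((1 + ρ) ^ (n - 1) + 1) * V * X ^ (n - 1) := by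
    rw [abs_le]
    have hu' : V * ((X + ρ) ^ n - X ^ n) ≤ V * (n * ρ * ((1 + ρ) ^ (n - 1)) * X ^ (n - 1)) :=
      mul_le_mul_of_nonneg_left hupper hVnonneg
    have hl' : V * (X ^ n - max (X - ρ) 0 ^ n) ≤ V * (n * ρ * X ^ (n - 1)) :=
      mul_le_mul_of_nonneg_left hlower hVnonneg
    have hnρV : 0 ≤ (n : ℝ) * ρ * V * X ^ (n - 1) := by positivity
    constructor
    · nlinarith [hloR, hl', hnρV]
    · nlinarith [hupR, hu', hnρV]
  -- finish
  rw [hcard, hcov]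
  have heq : A - V / D * X ^ n = (A * D - V * X ^ n) / D := by
    field_simp
  rw [heq, abs_div, abs_of_pos hDpos, div_le_iff₀ hDpos]
  calc |A * D - V * X ^ n| ≤ n * ρ * ((1 + ρ) ^ (n - 1) + 1) * V * X ^ (n - 1) := key
    _ = n * ρ * ((1 + ρ) ^ (n - 1) + 1) * V / D * X ^ (n - 1) * D := by
        field_simp
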